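/- arXiv:1912.02394 — 4 statements merged into one kernel-verified Lean document; each statement's English description precedes it below -/
import Mathlib

section
/- Let n p : ℕ, F : (Fin n → Bool) → (Fin n → Bool) and G : (Fin n → Bool) → (Fin p → Bool). Define the augmented Boolean network on the state space (Fin n → Bool) × (Fin p → Bool) with update map F̄ (x, y) = (F x, G x) and output map Ḡ (x, y) = y. Then the Boolean network (F, G) is observable if and only if the augmented Boolean network (F̄, Ḡ) is observable. -/
/-- A Boolean network `(F, G)` is observable if the map sending an initial state to its
output sequence is injective. -/
def BNObservable {n p : ℕ} (F : (Fin n → Bool) → (Fin n → Bool))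
    (G : (Fin n → Bool) → (Fin p → Bool)) : Prop :=
  Function.Injective (fun X₀ : Fin n → Bool => fun t : ℕ => G (F^[t] X₀))

/-- Observability of a general Boolean network over the state space
`(Fin n → Bool) × (Fin p → Bool)`. -/
def BNObservable' {n p : ℕ}
    (F : ((Fin n → Bool) × (Fin p → Bool)) → ((Fin n → Bool) × (Fin p → Bool)))
    (G : ((Fin n → Bool) × (Fin p → Bool)) → (Fin p → Bool)) : Prop :=
  Function.Injective (fun Z₀ : (Fin n → Bool) × (Fin p → Bool) => fun t : ℕ => G (F^[t] Z₀))

/-- The Boolean network `(F, G)` is observable iff the augmented Boolean network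
with update map `(x, y) ↦ (F x, G x)` and output map `(x, y) ↦ y` is observable. -/
theorem observable_iff_augmented_observable (n p : ℕ)
    (F : (Fin n → Bool) → (Fin n → Bool)) (G : (Fin n → Bool) → (Fin p → Bool)) :
    BNObservable F G ↔
      BNObservable' (fun z : (Fin n → Bool) × (Fin p → Bool) => (F z.1, G z.1))
        (fun z : (Fin n → Bool) × (Fin p → Bool) => z.2) := by
  have key : ∀ (t : ℕ) (z : (Fin n → Bool) × (Fin p → Bool)),
      (fun z : (Fin n → Bool) × (Fin p → Bool) => (F z.1, G z.1))^[t + 1] z =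
        (F^[t + 1] z.1, G (F^[t] z.1)) := by
    intro t
    induction t with
    | zero => intro z; simp
    | succ k ih =>
      intro z
      rw [Function.iterate_succ_apply, ih]; simp [Function.iterate_succ_apply]
  constructor
  · intro h z₁ z₂ hz
    have h0 := congrFun hz 0
    simp at h0
    have hx : z₁.1 = z₂.1 := by
      apply h
      funext t
      have := congrFun hz (t + 1)
      simpa [key] using this
    exact Prod.ext hx h0
  · intro h x₁ x₂ hx
    have hz : ((x₁, G x₁) : (Fin n → Bool) × (Fin p → Bool)) = (x₂, G x₂) := by
      apply h
      funext t
      cases t with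
      | zero => simpa using congrFun hx 0
      | succ k => simpa [key] using congrFun hx k
    exact (Prod.mk.injEq _ _ _ _ ▸ hz).1
end

section
/- Suppose the wiring digraph of a Boolean network with direct-measurement outputs satisfies both Property P1 and Property P2. Then the Boolean network is observable. -/
/-- Variable `k` is functional for the Boolean function `f`. -/
def Functional {n : ℕ} (f : (Fin n → Bool) → Bool) (k : Fin n) : Prop :=
  ∃ x : Fin n → Bool, f (Function.update x k (!(x k))) ≠ f x

/-- The dependency set of `f`: the set of its functional variables. -/
def DepSet {n : ℕ} (f : (Fin n → Bool) → Bool) : Set (Fin n) :=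
  {k | Functional f k}

/-- A Boolean function is determined by its functional variables. -/
lemma eq_of_agree_on_functional {n : ℕ} (f : (Fin n → Bool) → Bool) :
    ∀ x y : Fin n → Bool, (∀ k, Functional f k → x k = y k) → f x = f y := by
  suffices H : ∀ (l : List (Fin n)) (x y : Fin n → Bool),
      (∀ k, x k ≠ y k → k ∈ l) → (∀ k, Functional f k → x k = y k) → f x = f y by
    intro x y hagree
    exact H (List.finRange n) x y (fun k _ => List.mem_finRange k) hagree
  intro l
  induction l with
  | nil =>
    intro x y hl _
    have : x = y := by
      funext k
      by_contra hk
      exact absurd (hl k hk) List.not_mem_nil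
    rw [this]
  | cons k l ih =>
    intro x y hl hagree
    set y' : Fin n → Bool := Function.update y k (x k) with hy'
    have h1 : f y' = f y := by
      by_cases hxk : x k = y k
      · rw [hy', hxk, Function.update_eq_self]
      · have hkfun : ¬ Functional f k := fun hf => hxk (hagree k hf)
        simp only [Functional, not_exists, not_not] at hkfun
        have hx : x k = !(y k) := by
          cases hxky : x k <;> cases hyk : y k <;> simp_all
        rw [hy', hx]
        exact hkfun y
    have h2 : f x = f y' := by
      apply ih
      · intro k' hk'
        by_cases hkk : k' = k
        · exfalso; apply hk'; rw [hkk, hy', Function.update_self]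
        · have : y' k' = y k' := by rw [hy', Function.update_of_ne hkk]
          rw [this] at hk'
          have := hl k' hk'
          rcases List.mem_cons.mp this with h | h
          · exact absurd h hkk
          · exact h
      · intro k' hk'
        by_cases hkk : k' = k
        · subst hkk; rw [hy', Function.update_self]
        · rw [hy', Function.update_of_ne hkk]; exact hagree k' hk'
    rw [h2, h1]

/-- If `f` depends exactly on coordinate `i`, then `f` is injective in that coordinate. -/
lemma depSet_single_inj {n : ℕ} (f : (Fin n → Bool) → Bool) (i : Fin n)
    (h : DepSet f = {i}) (x y : Fin n → Bool) (hxy : x i ≠ y i) : f x ≠ f y := by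
  have hfun : ∀ k, Functional f k ↔ k = i := by
    intro k
    constructor
    · intro hk
      have : k ∈ DepSet f := hk
      rw [h] at this; exact this
    · intro hk
      rw [hk]
      show i ∈ DepSet f
      rw [h]; exact rfl
  have key : ∀ w w' : Fin n → Bool, w i = w' i → f w = f w' := by
    intro w w' hw
    apply eq_of_agree_on_functional
    intro k hk
    rw [hfun k] at hk; subst hk; exact hw
  obtain ⟨z, hz⟩ := (hfun i).mpr rfl
  have hxz : x i = z i ∨ x i = !(z i) := by cases x i <;> cases z i <;> simp
  rcases hxz with hxz | hxz
  · have hyz : y i = !(z i) := by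
      cases hy : y i <;> cases hzz : z i <;> simp_all
    have e1 : f x = f z := key x z hxz
    have e2 : f y = f (Function.update z i (!(z i))) := by
      apply key; rw [hyz, Function.update_self]
    rw [e1, e2]; exact fun e => hz (e.symm)
  · have hyz : y i = z i := by
      cases hy : y i <;> cases hzz : z i <;> simp_all
    have e1 : f x = f (Function.update z i (!(z i))) := by
      apply key; rw [hxz, Function.update_self]
    have e2 : f y = f z := key y z hyz
    rw [e1, e2]; exact hz

/-- If the wiring digraph (edge `j → i` iff `j` is functional for `fun x => F x i`)
of a Boolean network whose outputs directly measure the distinct state variables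
`obs 1, …, obs p` satisfies Property `P1` and Property `P2`, then the Boolean network
is observable. -/
theorem observable_of_P1_P2 (n p : ℕ)
    (F : (Fin n → Bool) → (Fin n → Bool)) (G : (Fin n → Bool) → (Fin p → Bool))
    (obs : Fin p → Fin n) (hobs : Function.Injective obs)
    (hG : ∀ (x : Fin n → Bool) (j : Fin p), G x j = x (obs j))
    -- Property P1
    (P1 : ∀ i : Fin n, i ∉ Set.range obs →
      ∃ j : Fin n, j ≠ i ∧ DepSet (fun x => F x j) = {i})
    -- Property P2
    (P2 : ∀ c : List (Fin n), c ≠ [] → c.Nodup →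
      c.Chain' (fun a b => Functional (fun x => F x b) a) →
      (∀ h : c ≠ [], Functional (fun x => F x (c.head h)) (c.getLast h)) →
      (∀ v ∈ c, v ∉ Set.range obs) →
      ∃ v ∈ c, ∃ j : Fin n, j ∉ c ∧ DepSet (fun x => F x j) = {v}) :
    Function.Injective (fun X₀ : Fin n → Bool => fun t : ℕ => G (F^[t] X₀)) := by
  classical
  intro X Y h
  simp only at h
  have hseq : ∀ (t : ℕ) (jp : Fin p), F^[t] X (obs jp) = F^[t] Y (obs jp) := by
    intro t jp
    have h1 := congrFun (congrFun h t) jp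
    rwa [hG, hG] at h1
  set R : Set (Fin n) := {i | ∀ t : ℕ, F^[t] X i = F^[t] Y i} with hRdef
  have hobsR : ∀ i ∈ Set.range obs, i ∈ R := by
    rintro i ⟨jp, rfl⟩ t
    exact hseq t jp
  have hstep : ∀ i j : Fin n, DepSet (fun x => F x j) = {i} → j ∈ R → i ∈ R := by
    intro i j hd hj t
    by_contra hne
    have hni := depSet_single_inj _ i hd (F^[t] X) (F^[t] Y) hne
    have hj' := hj (t + 1)
    rw [Function.iterate_succ_apply', Function.iterate_succ_apply'] at hj'
    exact hni hj'
  suffices hRuniv : ∀ i, i ∈ R by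
    funext i
    have := hRuniv i 0
    simpa using this
  by_contra hcon
  push_neg at hcon
  obtain ⟨i₀, hi₀⟩ := hcon
  set U : Set (Fin n) := Rᶜ with hUdef
  have hi₀U : i₀ ∈ U := hi₀
  have hUx : ∀ i ∈ U, ∃ j, j ≠ i ∧ DepSet (fun x => F x j) = {i} ∧ j ∈ U := by
    intro i hi
    have hio : i ∉ Set.range obs := fun hr => hi (hobsR i hr)
    obtain ⟨j, hji, hdj⟩ := P1 i hio
    exact ⟨j, hji, hdj, fun hjR => hi (hstep i j hdj hjR)⟩
  choose! σ hσne hσdep hσU using hUx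
  have hinj : Set.InjOn σ U := by
    intro a ha b hb hab
    have : ({a} : Set (Fin n)) = {b} := by
      rw [← hσdep a ha, ← hσdep b hb, hab]
    simpa using this
  have hmaps : Set.MapsTo σ U U := fun a ha => hσU a ha
  have hsurj : Set.SurjOn σ U U :=
    ((Set.Finite.injOn_iff_bijOn_of_mapsTo (Set.toFinite U) hmaps).mp hinj).surjOn
  -- the orbit of i₀ under σ
  have hu : ∀ k : ℕ, σ^[k] i₀ ∈ U := by
    intro k
    induction k with
    | zero => exact hi₀U
    | succ k ih => rw [Function.iterate_succ_apply']; exact hσU _ ih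
  have hcancel : ∀ d a : ℕ, σ^[a] i₀ = σ^[a + d] i₀ → σ^[d] i₀ = i₀ := by
    intro d a
    induction a with
    | zero => intro h0; simpa using h0.symm
    | succ a ih =>
      intro h0
      apply ih
      rw [Function.iterate_succ_apply', show a + 1 + d = (a + d) + 1 by omega,
        Function.iterate_succ_apply'] at h0
      exact hinj (hu a) (hu (a + d)) h0
  have hex : ∃ m : ℕ, 0 < m ∧ σ^[m] i₀ = i₀ := by
    obtain ⟨a, b, hne, heq⟩ :=
      Finite.exists_ne_map_eq_of_infinite (fun k : ℕ => σ^[k] i₀)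
    rcases hne.lt_or_gt with hab | hab
    · exact ⟨b - a, by omega, hcancel (b - a) a (by rw [show a + (b - a) = b by omega]; exact heq)⟩
    · exact ⟨a - b, by omega, hcancel (a - b) b (by rw [show b + (a - b) = a by omega]; exact heq.symm)⟩
  set m : ℕ := Nat.find hex with hmdef
  obtain ⟨hm0, hmi⟩ := Nat.find_spec hex
  have hmin : ∀ d : ℕ, 0 < d → d < m → σ^[d] i₀ ≠ i₀ := by
    intro d hd0 hdm hdi
    exact Nat.find_min hex hdm ⟨hd0, hdi⟩
  set c : List (Fin n) := (List.range m).map (fun k => σ^[k] i₀) with hcdef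
  have hclen : c.length = m := by simp [hcdef]
  have hcne : c ≠ [] := by
    intro hc
    rw [hc] at hclen
    simp at hclen
    omega
  have hcget : ∀ (q : ℕ) (hq : q < c.length), c.get ⟨q, hq⟩ = σ^[q] i₀ := by
    intro q hq
    simp [hcdef]
  have hcmem : ∀ v : Fin n, v ∈ c ↔ ∃ q, q < m ∧ σ^[q] i₀ = v := by
    intro v
    simp [hcdef, List.mem_map, List.mem_range, eq_comm]
  -- injectivity of the orbit map below m
  have horbinj : ∀ q r : ℕ, q < m → r < m → σ^[q] i₀ = σ^[r] i₀ → q = r := by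
    have aux : ∀ q r : ℕ, q ≤ r → q < m → r < m → σ^[q] i₀ = σ^[r] i₀ → q = r := by
      intro q r hqr hq hr heq
      rcases Nat.eq_or_lt_of_le hqr with h | h
      · exact h
      · exfalso
        have := hcancel (r - q) q (by rw [show q + (r - q) = r by omega]; exact heq)
        exact hmin (r - q) (by omega) (by omega) this
    intro q r hq hr heq
    rcases le_total q r with h | h
    · exact aux q r h hq hr heq
    · exact (aux r q h hr hq heq.symm).symm
  have hnodup : c.Nodup := by
    apply List.Nodup.map_on
    · intro a ha b hb hab
      exact horbinj a b (List.mem_range.mp ha) (List.mem_range.mp hb) hab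
    · exact List.nodup_range
  have hchain : c.Chain' (fun a b => Functional (fun x => F x b) a) := by
    show List.IsChain _ c
    rw [List.isChain_iff_getElem]
    intro q hq
    have e1 := hcget q (by omega)
    have e2 := hcget (q + 1) hq
    simp only [List.get_eq_getElem] at e1 e2
    rw [e1, e2]
    have hqm : q < m := by omega
    have : σ^[q + 1] i₀ = σ (σ^[q] i₀) := Function.iterate_succ_apply' σ q i₀
    rw [this]
    have hmem : (σ^[q] i₀) ∈ DepSet (fun x => F x (σ (σ^[q] i₀))) := by
      rw [hσdep _ (hu q)]; exact rfl
    exact hmem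
  have hlast : ∀ hne : c ≠ [],
      Functional (fun x => F x (c.head hne)) (c.getLast hne) := by
    intro hne
    have hhead : c.head hne = i₀ := by
      rw [List.head_eq_getElem_zero]
      have h0 : (0 : ℕ) < m := hm0
      simp [hcdef]
    have hgl : c.getLast hne = σ^[m - 1] i₀ := by
      rw [List.getLast_eq_getElem]
      simp [hcdef]
    rw [hhead, hgl]
    have hsm : σ (σ^[m - 1] i₀) = i₀ := by
      have h1 := (Function.iterate_succ_apply' σ (m - 1) i₀).symm
      rw [show (m - 1).succ = m by omega] at h1
      rw [h1]; exact hmi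
    have hmem : (σ^[m - 1] i₀) ∈ DepSet (fun x => F x (σ (σ^[m - 1] i₀))) := by
      rw [hσdep _ (hu (m - 1))]; exact rfl
    rw [hsm] at hmem
    exact hmem
  have hnotobs : ∀ v ∈ c, v ∉ Set.range obs := by
    intro v hv
    obtain ⟨q, _, rfl⟩ := (hcmem v).mp hv
    exact fun hr => (hu q) (hobsR _ hr)
  obtain ⟨v, hvc, j, hjc, hdj⟩ := P2 c hcne hnodup hchain hlast hnotobs
  obtain ⟨q, hqm, hqv⟩ := (hcmem v).mp hvc
  have hvU : v ∈ U := hqv ▸ hu q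
  have hjU : j ∈ U := fun hjR => hvU (hstep v j hdj hjR)
  obtain ⟨w, hwU, hwj⟩ := hsurj hjU
  have hwv : w = v := by
    have : ({w} : Set (Fin n)) = {v} := by
      rw [← hσdep w hwU, hwj, hdj]
    simpa using this
  subst hwv
  have hjv : j = σ^[q + 1] i₀ := by
    rw [Function.iterate_succ_apply', hqv, hwj]
  apply hjc
  rw [hcmem]
  by_cases hq1 : q + 1 < m
  · exact ⟨q + 1, hq1, hjv.symm⟩
  · refine ⟨0, hm0, ?_⟩
    have : q + 1 = m := by omega
    rw [hjv, this, hmi]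
    rfl
end

section
/- Suppose the vertex set Fin n of a Boolean network with direct-measurement outputs can be partitioned into p observed paths O_1, …, O_p that are pairwise vertex-disjoint, whose union of vertices is all of Fin n, and whose final vertices are the p directly observable vertices obs 1, …, obs p. Then the Boolean network is observable. -/
lemma not_functional_update {n} {f : (Fin n → Bool) → Bool} {i : Fin n}
    (h : ¬ Functional f i) (x : Fin n → Bool) (b : Bool) :
    f (Function.update x i b) = f x := by
  by_cases hb : b = x i
  · rw [hb, Function.update_eq_self]
  · have hb' : b = ! x i := by cases b <;> cases h' : x i <;> simp_all
    rw [hb']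
    by_contra hne
    exact h ⟨x, hne⟩

lemma eq_of_agree_on_depSet {n} (f : (Fin n → Bool) → Bool)
    (x y : Fin n → Bool) (h : ∀ i ∈ DepSet f, x i = y i) : f x = f y := by
  have key : ∀ d : ℕ, ∀ x y : Fin n → Bool,
      (Finset.univ.filter (fun i => x i ≠ y i)).card = d →
      (∀ i ∈ DepSet f, x i = y i) → f x = f y := by
    intro d
    induction d with
    | zero =>
      intro x y hc _
      have hxy : x = y := by
        funext i
        by_contra hne
        have hm : i ∈ Finset.univ.filter (fun i => x i ≠ y i) := by simp [hne]
        rw [Finset.card_eq_zero] at hc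
        rw [hc] at hm
        simp at hm
      rw [hxy]
    | succ d ih =>
      intro x y hc h
      have hne : (Finset.univ.filter (fun i => x i ≠ y i)).Nonempty := by
        rw [← Finset.card_pos, hc]; omega
      obtain ⟨i, hi⟩ := hne
      have hi' : x i ≠ y i := by simpa using hi
      have hni : ¬ Functional f i := fun hf => hi' (h i hf)
      have step : f (Function.update x i (y i)) = f x := not_functional_update hni x (y i)
      have main : f (Function.update x i (y i)) = f y := by
        apply ih
        · have heq : Finset.univ.filter (fun j => Function.update x i (y i) j ≠ y j)
              = (Finset.univ.filter (fun j => x j ≠ y j)).erase i := by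
            ext j
            by_cases hj : j = i <;> simp [Function.update_apply, hj, hi']
          rw [heq, Finset.card_erase_of_mem (by simpa using hi'), hc]; omega
        · intro j hj
          by_cases hji : j = i <;> simp [Function.update_apply, hji, h j hj]
      rw [← step, main]
  exact key _ x y rfl h

lemma value_eq_of_depSet_singleton {n} {f : (Fin n → Bool) → Bool} {k : Fin n}
    (h : DepSet f = {k}) {x y : Fin n → Bool} (hxy : f x = f y) : x k = y k := by
  by_contra hne
  have hk : Functional f k := by
    have : k ∈ DepSet f := by rw [h]; exact rfl
    exact this
  obtain ⟨z, hz⟩ := hk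
  have dep : ∀ u v : Fin n → Bool, u k = v k → f u = f v := by
    intro u v huv
    apply eq_of_agree_on_depSet
    intro i hi
    rw [h] at hi
    have : i = k := hi
    rw [this]; exact huv
  have hzk : z k = x k ∨ z k = y k := by
    cases hz' : z k <;> cases hx : x k <;> cases hy : y k <;> simp_all
  rcases hzk with hzx | hzy
  · have h1 : f z = f x := dep _ _ hzx
    have h2 : f (Function.update z k (! z k)) = f y := by
      apply dep
      simp only [Function.update_self]
      rw [hzx]
      cases hx : x k <;> cases hy : y k <;> simp_all
    exact hz (by rw [h1, h2, hxy])
  · have h1 : f z = f y := dep _ _ hzy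
    have h2 : f (Function.update z k (! z k)) = f x := by
      apply dep
      simp only [Function.update_self]
      rw [hzy]
      cases hx : x k <;> cases hy : y k <;> simp_all
    exact hz (by rw [h1, h2, hxy])

def ObservedPath {n p : ℕ} (F : (Fin n → Bool) → (Fin n → Bool))
    (obs : Fin p → Fin n) (O : List (Fin n)) : Prop :=
  O ≠ [] ∧ O.Nodup ∧
  (∀ h : O ≠ [], O.getLast h ∈ Set.range obs) ∧
  (∀ (k : ℕ) (hk : k + 1 < O.length),
    O.get ⟨k, by omega⟩ ∉ Set.range obs ∧
    DepSet (fun x => F x (O.get ⟨k + 1, hk⟩)) = {O.get ⟨k, by omega⟩})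

/-- If the vertex set `Fin n` can be partitioned into `p` pairwise vertex-disjoint
observed paths covering all of `Fin n`, whose final vertices are the `p` directly
observable vertices, then the Boolean network is observable. -/
theorem observable_of_observed_path_partition (n p : ℕ)
    (F : (Fin n → Bool) → (Fin n → Bool)) (G : (Fin n → Bool) → (Fin p → Bool))
    (obs : Fin p → Fin n) (hobs : Function.Injective obs)
    (hG : ∀ (x : Fin n → Bool) (j : Fin p), G x j = x (obs j))
    (O : Fin p → List (Fin n))
    (hpath : ∀ a : Fin p, ObservedPath F obs (O a))
    (hdisj : ∀ a b : Fin p, a ≠ b → ∀ v : Fin n, v ∈ O a → v ∉ O b)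
    (hcover : ∀ v : Fin n, ∃ a : Fin p, v ∈ O a)
    (hlast : ∀ (a : Fin p) (h : O a ≠ []), (O a).getLast h = obs a) :
    Function.Injective (fun X₀ : Fin n → Bool => fun t : ℕ => G (F^[t] X₀)) := by
  intro X Y hXY
  simp only at hXY
  have hout : ∀ (t : ℕ) (a : Fin p), (F^[t] X) (obs a) = (F^[t] Y) (obs a) := by
    intro t a
    have := congrFun (congrFun hXY t) a
    simpa [hG] using this
  have key : ∀ d : ℕ, ∀ (a : Fin p) (j : ℕ) (hj : j + d + 1 = (O a).length),
      ∀ t : ℕ, (F^[t] X) ((O a).get ⟨j, by omega⟩) = (F^[t] Y) ((O a).get ⟨j, by omega⟩) := by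
    intro d
    induction d with
    | zero =>
      intro a j hj t
      have hne : O a ≠ [] := (hpath a).1
      have hg : (O a).get ⟨j, by omega⟩ = (O a).getLast hne := by
        rw [List.getLast_eq_getElem, List.get_eq_getElem]
        congr 1
        simp
        omega
      rw [hg, hlast a hne]
      exact hout t a
    | succ d ih =>
      intro a j hj t
      have hj1 : (j + 1) + d + 1 = (O a).length := by omega
      have hk : j + 1 < (O a).length := by omega
      have hdep := ((hpath a).2.2.2 j hk).2
      have hnext := ih a (j + 1) hj1 (t + 1)
      rw [Function.iterate_succ_apply' F t X, Function.iterate_succ_apply' F t Y] at hnext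
      exact value_eq_of_depSet_singleton hdep hnext
  funext v
  obtain ⟨a, hv⟩ := hcover v
  obtain ⟨m, hm⟩ := List.mem_iff_get.mp hv
  have hlt : (m : ℕ) < (O a).length := m.isLt
  have := key ((O a).length - 1 - m) a m (by omega) 0
  simp only [Function.iterate_zero, id] at this
  rwa [show ((O a).get ⟨(m : ℕ), by omega⟩) = v from by rw [← hm]] at this
end

section
/- Suppose the vertex set Fin n of a Boolean network with direct-measurement outputs can be partitioned into p observed paths O_1, …, O_p that are pairwise vertex-disjoint, whose union of vertices is all of Fin n, and whose final vertices are the p directly observable vertices. Then the wiring digraph of the Boolean network satisfies Property P1 and Property P2. -/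
/-- If the vertex set `Fin n` can be partitioned into `p` pairwise vertex-disjoint
observed paths covering all of `Fin n`, whose final vertices are the `p` directly
observable vertices, then the wiring digraph (edge `j → i` iff `j` is functional for
`fun x => F x i`) satisfies Property `P1` and Property `P2`. -/
theorem P1_and_P2_of_observed_path_partition (n p : ℕ)
    (F : (Fin n → Bool) → (Fin n → Bool)) (G : (Fin n → Bool) → (Fin p → Bool))
    (obs : Fin p → Fin n) (hobs : Function.Injective obs)
    (hG : ∀ (x : Fin n → Bool) (j : Fin p), G x j = x (obs j))
    (O : Fin p → List (Fin n))
    (hpath : ∀ a : Fin p, ObservedPath F obs (O a))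
    (hdisj : ∀ a b : Fin p, a ≠ b → ∀ v : Fin n, v ∈ O a → v ∉ O b)
    (hcover : ∀ v : Fin n, ∃ a : Fin p, v ∈ O a)
    (hlast : ∀ (a : Fin p) (h : O a ≠ []), (O a).getLast h = obs a) :
    -- Property P1
    (∀ i : Fin n, i ∉ Set.range obs →
      ∃ j : Fin n, j ≠ i ∧ DepSet (fun x => F x j) = {i}) ∧
    -- Property P2
    (∀ c : List (Fin n), c ≠ [] → c.Nodup →
      c.Chain' (fun a b => Functional (fun x => F x b) a) →
      (∀ h : c ≠ [], Functional (fun x => F x (c.head h)) (c.getLast h)) →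
      (∀ v ∈ c, v ∉ Set.range obs) →
      ∃ v ∈ c, ∃ j : Fin n, j ∉ c ∧ DepSet (fun x => F x j) = {v}) := by
  -- key: a non-observable vertex at position k on a path has a successor at k+1
  have key : ∀ (a : Fin p) (k : ℕ) (hk : k < (O a).length),
      (O a).get ⟨k, hk⟩ ∉ Set.range obs →
      ∃ hk' : k + 1 < (O a).length,
        DepSet (fun x => F x ((O a).get ⟨k + 1, hk'⟩)) = {(O a).get ⟨k, hk⟩} := by
    intro a k hk hno
    obtain ⟨hne, hnd, hlastobs, hdep⟩ := hpath a
    have hklt : k ≠ (O a).length - 1 := by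
      intro h
      apply hno
      have : (O a).get ⟨k, hk⟩ = (O a).getLast hne := by
        rw [List.getLast_eq_getElem, ← List.get_eq_getElem (l := O a) (i := ⟨(O a).length - 1, by omega⟩)]
        congr 1
        exact Fin.ext h
      rw [this, hlast a hne]
      exact Set.mem_range_self a
    have hk' : k + 1 < (O a).length := by omega
    exact ⟨hk', (hdep k hk').2⟩
  constructor
  · -- P1
    intro i hi
    obtain ⟨a, ha⟩ := hcover i
    obtain ⟨⟨k, hk⟩, hget⟩ := List.mem_iff_get.mp ha
    obtain ⟨hk', hdep⟩ := key a k hk (hget ▸ hi)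
    refine ⟨(O a).get ⟨k + 1, hk'⟩, ?_, hget ▸ hdep⟩
    intro h
    have := (List.Nodup.get_inj_iff (hpath a).2.1).mp (h.trans hget.symm)
    simp [Fin.ext_iff] at this
  · -- P2
    intro c hcne hcnd _ _ hnoobs
    by_contra hcon
    push_neg at hcon
    -- hcon : ∀ v ∈ c, ∀ j, j ∉ c → DepSet ... ≠ {v}
    obtain ⟨v₀, hv₀⟩ := List.exists_mem_of_ne_nil c hcne
    obtain ⟨a, ha⟩ := hcover v₀
    obtain ⟨⟨k₀, hk₀⟩, hget₀⟩ := List.mem_iff_get.mp ha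
    have main : ∀ m : ℕ, ∃ k : ℕ, ∃ hk : k < (O a).length,
        m ≤ k ∧ (O a).get ⟨k, hk⟩ ∈ c := by
      intro m
      induction m with
      | zero => exact ⟨k₀, hk₀, Nat.zero_le _, hget₀ ▸ hv₀⟩
      | succ m ih =>
        obtain ⟨k, hk, hmk, hkc⟩ := ih
        have hno := hnoobs _ hkc
        obtain ⟨hk', hdep⟩ := key a k hk hno
        have hjc : (O a).get ⟨k + 1, hk'⟩ ∈ c := by
          by_contra hj
          exact hcon _ hkc _ hj hdep
        exact ⟨k + 1, hk', by omega, hjc⟩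
    obtain ⟨k, hk, hmk, _⟩ := main (O a).length
    omega
end
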